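/- arXiv:2007.01637 — 2 statements merged into one kernel-verified Lean document; each statement's English description precedes it below -/
import Mathlib

section
/- Soundness of invalidity: if a timed observation graph implementing an observation function Obs contains an observation state s_o labelled by a K-closed word with resets w_zr whose label has cardinality two (i.e., it contains both accept and reject), then no deterministic timed automaton with maximal constant K both has w_zr as (the K-closed abstraction of) one of its runs and is consistent with Obs on all words in Dom(Obs). -/
def Keq (K : ℕ) (x y : ℝ) : Prop :=
  ((K : ℝ) < x ∧ (K : ℝ) < y) ∨
  (x = y ∧ ∃ n : ℤ, x = n) ∨
  ((¬ ∃ n : ℤ, x = n) ∧ (¬ ∃ n : ℤ, y = n) ∧ ⌊x⌋ = ⌊y⌋)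

inductive Cmp | lt | le | eq | ge | gt

def Cmp.holds : Cmp → ℝ → ℝ → Prop
  | .lt, a, b => a < b
  | .le, a, b => a ≤ b
  | .eq, a, b => a = b
  | .ge, a, b => a ≥ b
  | .gt, a, b => a > b

abbrev Guard (C : Type) := List (C × Cmp × ℕ)

def satG {C : Type} (v : C → ℝ) (g : Guard C) : Prop :=
  ∀ p ∈ g, Cmp.holds p.2.1 (v p.1) (p.2.2 : ℝ)

structure TA (L A C : Type) where
  init : L
  trans : Set (L × A × Guard C × Finset C × L)
  accept : Set L

def Deterministic {L A C : Type} (M : TA L A C) : Prop :=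
  ∀ e ∈ M.trans, ∀ e' ∈ M.trans, e.1 = e'.1 → e.2.1 = e'.2.1 →
    (∃ v : C → ℝ, satG v e.2.2.1 ∧ satG v e'.2.2.1) →
    e.2.2.2.1 = e'.2.2.2.1 ∧ e.2.2.2.2 = e'.2.2.2.2

/-- Valuation sequence induced by a sequence of delays and resets:
`v₀ = 0`, `v_{i+1} = (v_i + t_i)[rs_i ← 0]`. -/
def vseq {C : Type} [DecidableEq C] (t : ℕ → ℝ) (rs : ℕ → Finset C) :
    ℕ → C → ℝ
  | 0, _ => 0
  | i + 1, x => if x ∈ rs i then 0 else vseq t rs i x + t i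

theorem keq_holds_iff (K : ℕ) (x y : ℝ) (h : Keq K x y) (op : Cmp) (c : ℕ)
    (hc : c ≤ K) : Cmp.holds op x c ↔ Cmp.holds op y c := by
  have hcK : (c : ℝ) ≤ K := by exact_mod_cast hc
  rcases h with ⟨hx, hy⟩ | ⟨hxy, _⟩ | ⟨hx, hy, hfl⟩
  · have hx' : (c : ℝ) < x := lt_of_le_of_lt hcK hx
    have hy' : (c : ℝ) < y := lt_of_le_of_lt hcK hy
    cases op <;> simp [Cmp.holds] <;> constructor <;> intro h' <;> linarith
  · subst hxy; rfl
  · have hxne : x ≠ (c : ℝ) := fun h' => hx ⟨c, by exact_mod_cast h'⟩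
    have hyne : y ≠ (c : ℝ) := fun h' => hy ⟨c, by exact_mod_cast h'⟩
    have hcast : ((c : ℤ) : ℝ) = (c : ℝ) := by push_cast; rfl
    have hlt : x < (c : ℝ) ↔ y < (c : ℝ) := by
      rw [← hcast, ← Int.floor_lt, ← Int.floor_lt, hfl]
    have hle : (c : ℝ) ≤ x ↔ (c : ℝ) ≤ y := by
      rw [← hcast, ← Int.le_floor, ← Int.le_floor, hfl]
    cases op <;> simp only [Cmp.holds, ge_iff_le, gt_iff_lt]
    · exact hlt
    · constructor <;> intro h'
      · exact le_of_lt (hlt.mp (lt_of_le_of_ne h' hxne))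
      · exact le_of_lt (hlt.mpr (lt_of_le_of_ne h' hyne))
    · constructor <;> intro h' <;> [exact absurd h' hxne; exact absurd h' hyne]
    · exact hle
    · constructor <;> intro h'
      · exact lt_of_le_of_ne (hle.mp (le_of_lt h')) (Ne.symm hyne)
      · exact lt_of_le_of_ne (hle.mpr (le_of_lt h')) (Ne.symm hxne)

/-- Soundness of invalidity: if two timed words are compatible with the same
K-closed word with resets (same actions, same resets, pointwise `K`-equivalent
configurations) but carry different observations, then no deterministic TA with
maximal constant `K` can both execute that K-closed word on each of them and be
consistent with the observations. -/
theorem invalidity_sound {L A C : Type} [DecidableEq C] (K : ℕ)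
    (M : TA L A C) (hdet : Deterministic M)
    (hK : ∀ e ∈ M.trans, ∀ p ∈ e.2.2.1, p.2.2 ≤ K)
    (n : ℕ) (t₁ t₂ : ℕ → ℝ) (a : ℕ → A) (rs : ℕ → Finset C)
    (ℓ₁ ℓ₂ : ℕ → L) (g₁ g₂ : ℕ → Guard C)
    -- `M` executes the first timed word along the K-closed word (actions `a`, resets `rs`):
    (hinit₁ : ℓ₁ 0 = M.init)
    (hrun₁ : ∀ i < n, (ℓ₁ i, a i, g₁ i, rs i, ℓ₁ (i + 1)) ∈ M.trans ∧
      satG (fun x => vseq t₁ rs i x + t₁ i) (g₁ i))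
    -- `M` executes the second timed word along the same K-closed word:
    (hinit₂ : ℓ₂ 0 = M.init)
    (hrun₂ : ∀ i < n, (ℓ₂ i, a i, g₂ i, rs i, ℓ₂ (i + 1)) ∈ M.trans ∧
      satG (fun x => vseq t₂ rs i x + t₂ i) (g₂ i))
    -- the two timed words are compatible with the same K-closed word:
    (hkeq : ∀ i ≤ n, ∀ x, Keq K (vseq t₁ rs i x) (vseq t₂ rs i x))
    (hkeq' : ∀ i < n, ∀ x,
      Keq K (vseq t₁ rs i x + t₁ i) (vseq t₂ rs i x + t₂ i))
    -- the observations of the two words differ: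
    (Obs₁ Obs₂ : Bool) (hObs : Obs₁ ≠ Obs₂)
    -- and `M` is consistent with both observations:
    (hcons₁ : ℓ₁ n ∈ M.accept ↔ Obs₁ = true)
    (hcons₂ : ℓ₂ n ∈ M.accept ↔ Obs₂ = true) :
    False := by
  have hloc : ∀ i, i ≤ n → ℓ₁ i = ℓ₂ i := by
    intro i
    induction i with
    | zero => intro _; rw [hinit₁, hinit₂]
    | succ i ih =>
      intro hi
      have hi' : i < n := hi
      have h1 := hrun₁ i hi'
      have h2 := hrun₂ i hi'
      have hsat2 : satG (fun x => vseq t₁ rs i x + t₁ i) (g₂ i) := by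
        intro p hp
        exact (keq_holds_iff K _ _ (hkeq' i hi' p.1) p.2.1 p.2.2
          (hK _ h2.1 p hp)).mpr (h2.2 p hp)
      have heq : ℓ₂ i = ℓ₁ i := (ih (le_of_lt hi')).symm
      rw [heq] at h2
      have hd := hdet _ h1.1 _ h2.1 rfl rfl
        ⟨fun x => vseq t₁ rs i x + t₁ i, h1.2, hsat2⟩
      exact hd.2
  have hfin := hloc n le_rfl
  rw [hfin] at hcons₁
  have : Obs₁ = true ↔ Obs₂ = true := hcons₁.symm.trans hcons₂
  cases Obs₁ <;> cases Obs₂ <;> simp_all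
end

section
/- Existence of a ≼-closed and ≼-unique subset: for any finite tree T (e.g., a resulting graph of a reset strategy on a timed decision graph) and any height-monotone preorder ≼ on its nodes, there exists a prefix-closed subset U of nodes of T such that (i) every child of a node of U is ≼-below some element of U, and (ii) no two distinct elements of U are comparable by ≼. -/
/-!
Among the prefix-closed, `≼`-closed sets of nodes (the whole tree is one), take one of minimal
weight `∑ (|V| + 1) ^ height`. If it contained `u ≠ u'` with `u ≼ u'`, replace its part inside the
subtree of `u` by the full subtrees of those children of the remaining part that are lower than
`u`. A child formerly covered by `u` is now covered by `u'`; one covered by a proper descendant of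
`u` is lower than `u`, hence now present itself. Everything added is lower than `u`, so with base
`|V| + 1` the weight strictly drops.
-/

open Finset

theorem Finset.sum_pow_lt_pow_of_card_lt {ι : Type*} {A : Finset ι} {N h : ℕ} {f : ι → ℕ}
    (hA : #A < N) (hf : ∀ x ∈ A, f x < h) : ∑ x ∈ A, N ^ f x < N ^ h := by
  have hN : 0 < N := (Nat.zero_le _).trans_lt hA
  refine Nat.lt_of_mul_lt_mul_left (a := N) ?_
  calc N * ∑ x ∈ A, N ^ f x = ∑ x ∈ A, N ^ (f x + 1) := by simp only [mul_sum, pow_succ']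
    _ ≤ ∑ _x ∈ A, N ^ h := sum_le_sum fun x hx => Nat.pow_le_pow_right hN (hf x hx)
    _ = #A * N ^ h := by rw [sum_const, smul_eq_mul]
    _ < N * N ^ h := Nat.mul_lt_mul_of_pos_right hA (pow_pos hN h)

namespace ParentTree

open scoped Classical

variable {V : Type*} {parent : V → V} {root : V} {height : V → ℕ}

variable (parent) in
def IsDescendant (x a : V) : Prop := ∃ k, parent^[k] x = a

theorem IsDescendant.refl (x : V) : IsDescendant parent x x := ⟨0, rfl⟩

theorem IsDescendant.of_parent {x a : V} (h : IsDescendant parent (parent x) a) :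
    IsDescendant parent x a :=
  let ⟨k, hk⟩ := h; ⟨k + 1, hk⟩

theorem IsDescendant.parent_of_ne {x a : V} (h : IsDescendant parent x a) (hne : x ≠ a) :
    IsDescendant parent (parent x) a := by
  obtain ⟨_ | k, hk⟩ := h
  · exact absurd hk hne
  · exact ⟨k, hk⟩

theorem IsDescendant.eq_of_root (hroot : parent root = root) {a : V}
    (h : IsDescendant parent root a) : a = root := by
  obtain ⟨k, rfl⟩ := h
  exact Function.iterate_fixed hroot k

theorem height_le_height_parent (hroot : parent root = root)
    (hheight : ∀ v, v ≠ root → height v < height (parent v)) (x : V) :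
    height x ≤ height (parent x) := by
  rcases eq_or_ne x root with rfl | hx
  · rw [hroot]
  · exact (hheight x hx).le

theorem IsDescendant.height_le (hroot : parent root = root)
    (hheight : ∀ v, v ≠ root → height v < height (parent v)) {x a : V}
    (h : IsDescendant parent x a) : height x ≤ height a := by
  obtain ⟨k, rfl⟩ := h
  refine monotone_nat_of_le_succ (f := fun k => height (parent^[k] x)) (fun k => ?_) k.zero_le
  simpa only [Function.iterate_succ_apply'] using height_le_height_parent hroot hheight _

theorem IsDescendant.height_lt (hroot : parent root = root)
    (hheight : ∀ v, v ≠ root → height v < height (parent v)) {x a : V}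
    (h : IsDescendant parent x a) (hne : x ≠ a) : height x < height a := by
  have hx : x ≠ root := by
    rintro rfl
    exact hne (h.eq_of_root hroot).symm
  exact (hheight x hx).trans_le ((h.parent_of_ne hne).height_le hroot hheight)

variable (parent root) in
def IsPrefixClosed (S : Finset V) : Prop :=
  root ∈ S ∧ ∀ v ∈ S, v ≠ root → parent v ∈ S

variable (parent root) in
def IsLeClosed (le : V → V → Prop) (S : Finset V) : Prop :=
  ∀ u ∈ S, ∀ c, c ≠ root → parent c = u → ∃ u' ∈ S, le c u'

variable [Fintype V]

variable (parent) in
noncomputable def subtree (a : V) : Finset V := {x | IsDescendant parent x a}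

@[simp]
theorem mem_subtree {x a : V} : x ∈ subtree parent a ↔ IsDescendant parent x a := by
  simp [subtree]

variable (parent height) in
noncomputable def prune (U : Finset V) (u : V) : Finset V :=
  U \ subtree parent u ∪
    ({x | ∃ c, IsDescendant parent x c ∧ parent c ∈ U \ subtree parent u ∧ height c < height u} :
      Finset V)

theorem mem_prune {U : Finset V} {u x : V} :
    x ∈ prune parent height U u ↔
      (x ∈ U ∧ ¬IsDescendant parent x u) ∨
        ∃ c, IsDescendant parent x c ∧ (parent c ∈ U ∧ ¬IsDescendant parent (parent c) u) ∧
          height c < height u := by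
  simp [prune]

theorem isPrefixClosed_prune (hroot : parent root = root) {U : Finset V} {u : V}
    (hU : IsPrefixClosed parent root U) (hu : u ≠ root) :
    IsPrefixClosed parent root (prune parent height U u) := by
  refine ⟨mem_prune.2 (.inl ⟨hU.1, fun h => hu (h.eq_of_root hroot)⟩), fun v hv hvr => ?_⟩
  rcases mem_prune.1 hv with ⟨hvU, hvu⟩ | ⟨c, hvc, hc, hcu⟩
  · exact mem_prune.2 (.inl ⟨hU.2 v hvU hvr, fun h => hvu h.of_parent⟩)
  · rcases eq_or_ne v c with rfl | hne
    · exact mem_prune.2 (.inl hc)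
    · exact mem_prune.2 (.inr ⟨c, hvc.parent_of_ne hne, hc, hcu⟩)

theorem isLeClosed_prune (hroot : parent root = root)
    (hheight : ∀ v, v ≠ root → height v < height (parent v)) {le : V → V → Prop}
    (hrefl : ∀ v, le v v) (htrans : ∀ u v w, le u v → le v w → le u w)
    (hmono : ∀ u v, le u v → height u ≤ height v) {U : Finset V} (hU : IsLeClosed parent root le U)
    {u u' : V} (hu' : u' ∈ U) (hu'u : ¬IsDescendant parent u' u) (hle : le u u') :
    IsLeClosed parent root le (prune parent height U u) := by
  intro v hv c hcr rfl
  rcases mem_prune.1 hv with ⟨hvU, hvu⟩ | ⟨d, hvd, hd, hdu⟩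
  · obtain ⟨w, hwU, hcw⟩ := hU _ hvU c hcr rfl
    by_cases hwu : IsDescendant parent w u
    · rcases eq_or_ne w u with rfl | hne
      · exact ⟨u', mem_prune.2 (.inl ⟨hu', hu'u⟩), htrans _ _ _ hcw hle⟩
      · have hc : height c < height u :=
          (hmono _ _ hcw).trans_lt (hwu.height_lt hroot hheight hne)
        exact ⟨c, mem_prune.2 (.inr ⟨c, .refl c, ⟨hvU, hvu⟩, hc⟩), hrefl c⟩
    · exact ⟨w, mem_prune.2 (.inl ⟨hwU, hwu⟩), hcw⟩
  · exact ⟨c, mem_prune.2 (.inr ⟨d, hvd.of_parent, hd, hdu⟩), hrefl c⟩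

variable (height) in
/-- With base `|V| + 1`, comparing weights compares the numbers of nodes of each height,
lexicographically from the top. -/
def weight (S : Finset V) : ℕ := ∑ x ∈ S, (Fintype.card V + 1) ^ height x

theorem weight_sdiff_union_lt {U D A : Finset V} {u : V} (hu : u ∈ U ∩ D)
    (hA : ∀ x ∈ A, height x < height u) : weight height (U \ D ∪ A) < weight height U := by
  have hcard : #A < Fintype.card V + 1 := Nat.lt_succ_of_le A.card_le_univ
  calc weight height (U \ D ∪ A) ≤ weight height (U \ D) + weight height A :=
        le_of_le_of_eq (Nat.le_add_right _ _) (sum_union_inter ..)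
    _ < weight height (U \ D) + (Fintype.card V + 1) ^ height u :=
        Nat.add_lt_add_left (sum_pow_lt_pow_of_card_lt hcard hA) _
    _ ≤ weight height (U \ D) + weight height (U ∩ D) :=
        Nat.add_le_add_left
          (single_le_sum (f := fun x => (Fintype.card V + 1) ^ height x) (by simp) hu) _
    _ = weight height U := by rw [add_comm]; exact sum_inter_add_sum_sdiff ..

theorem weight_prune_lt (hroot : parent root = root)
    (hheight : ∀ v, v ≠ root → height v < height (parent v)) {U : Finset V} {u : V}
    (hu : u ∈ U) : weight height (prune parent height U u) < weight height U := by
  refine weight_sdiff_union_lt (mem_inter.2 ⟨hu, mem_subtree.2 (.refl u)⟩) fun x hx => ?_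
  obtain ⟨c, hxc, -, hcu⟩ := (mem_filter.1 hx).2
  exact (hxc.height_le hroot hheight).trans_lt hcu

theorem exists_isPrefixClosed_isLeClosed_isAntichain (hroot : parent root = root)
    (hreach : ∀ v, IsDescendant parent v root)
    (hheight : ∀ v, v ≠ root → height v < height (parent v)) {le : V → V → Prop}
    (hrefl : ∀ v, le v v) (htrans : ∀ u v w, le u v → le v w → le u w)
    (hmono : ∀ u v, le u v → height u ≤ height v) :
    ∃ U : Finset V, IsPrefixClosed parent root U ∧ IsLeClosed parent root le U ∧
      IsAntichain le (U : Set V) := by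
  let admissible : Finset (Finset V) :=
    {S | IsPrefixClosed parent root S ∧ IsLeClosed parent root le S}
  have huniv : univ ∈ admissible := by
    simp only [admissible, mem_filter, mem_univ, true_and]
    exact ⟨⟨mem_univ _, fun _ _ _ => mem_univ _⟩, fun _ _ c _ _ => ⟨c, mem_univ _, hrefl c⟩⟩
  obtain ⟨U, hU, hmin⟩ := exists_min_image admissible (weight height) ⟨univ, huniv⟩
  obtain ⟨hpre, hcl⟩ := (mem_filter.1 hU).2
  refine ⟨U, hpre, hcl, fun u hu u' hu' hne hle => ?_⟩
  have hu'u : ¬IsDescendant parent u' u := fun h =>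
    (hmono _ _ hle).not_gt (h.height_lt hroot hheight (Ne.symm hne))
  have hur : u ≠ root := by
    rintro rfl
    exact hu'u (hreach u')
  have hprune : prune parent height U u ∈ admissible :=
    mem_filter.2 ⟨mem_univ _, isPrefixClosed_prune hroot hpre hur,
      isLeClosed_prune hroot hheight hrefl htrans hmono hcl hu' hu'u hle⟩
  exact (weight_prune_lt hroot hheight hu).not_ge (hmin _ hprune)

end ParentTree

theorem exists_closed_unique_subset_general {V : Type} [Fintype V]
    (root : V) (parent : V → V) (hroot : parent root = root)
    (hreach : ∀ v, ∃ k, parent^[k] v = root)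
    (height : V → ℕ)
    (hheight : ∀ v, v ≠ root → height v < height (parent v))
    (le : V → V → Prop)
    (hrefl : ∀ v, le v v)
    (htrans : ∀ u v w, le u v → le v w → le u w)
    (hmono : ∀ u v, le u v → height u ≤ height v) :
    ∃ U : Set V,
      root ∈ U ∧
      (∀ v ∈ U, v ≠ root → parent v ∈ U) ∧
      (∀ u ∈ U, ∀ c, c ≠ root → parent c = u → ∃ u' ∈ U, le c u') ∧
      (∀ u ∈ U, ∀ u' ∈ U, u ≠ u' → ¬ le u u') := by
  obtain ⟨U, ⟨hroot_mem, hpre⟩, hcl, hanti⟩ :=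
    ParentTree.exists_isPrefixClosed_isLeClosed_isAntichain hroot hreach hheight hrefl htrans hmono
  exact ⟨U, hroot_mem, hpre, hcl, hanti⟩

/-- Existence of a `≼`-closed and `≼`-unique prefix-closed subset: in any
finite rooted tree (given by a parent function, every node reaching the root,
with a height function decreasing from parents to children), for any
height-monotone preorder `≼`, there is a prefix-closed set of nodes `U` such
that every child of a node of `U` is `≼`-below some element of `U` and no two
distinct elements of `U` are `≼`-comparable. -/
theorem exists_closed_unique_subset {V : Type} [Fintype V] [DecidableEq V]
    (root : V) (parent : V → V) (hroot : parent root = root)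
    (hreach : ∀ v, ∃ k, parent^[k] v = root)
    (height : V → ℕ)
    (hheight : ∀ v, v ≠ root → height v < height (parent v))
    (le : V → V → Prop)
    (hrefl : ∀ v, le v v)
    (htrans : ∀ u v w, le u v → le v w → le u w)
    (hmono : ∀ u v, le u v → height u ≤ height v) :
    ∃ U : Set V,
      root ∈ U ∧
      (∀ v ∈ U, v ≠ root → parent v ∈ U) ∧
      (∀ u ∈ U, ∀ c, c ≠ root → parent c = u → ∃ u' ∈ U, le c u') ∧
      (∀ u ∈ U, ∀ u' ∈ U, u ≠ u' → ¬ le u u') :=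
  exists_closed_unique_subset_general root parent hroot hreach height hheight le hrefl htrans hmono
end
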